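/- arXiv:2107.03836 — 2 statements merged into one kernel-verified Lean document; each statement's English description precedes it below -/
import Mathlib

section
/- There is a universal constant A > 0 with the following property. Let μ and ν be Borel probability measures on ℝ², let Γ be a grid on ℝ² with C cells, let G be a k×ℓ grid with β = k·ℓ < C cells, let δ (respectively d) denote the Γ-boundary mass of μ (respectively ν) with respect to G, and let G' be the k×ℓ subgrid of Γ obtained from G by replacing each cut point of G that is not a cut point of Γ with a nearest cut point of Γ. Then |I(μ|_G) − I(ν|_G)| ≤ A·δ·log₂(β/δ) + A·d·log₂(β/d) + |I(μ|_{G'}) − I(ν|_{G'})|, where a term x·log₂(β/x) is taken to be 0 when x = 0. -/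
open MeasureTheory Finset

noncomputable section

/-- A grid with `r` rows and `c` columns on ℝ², given by `r - 1` strictly increasing
row cut points and `c - 1` strictly increasing column cut points. -/
structure Grid (r c : ℕ) where
  rowCuts : Fin (r - 1) → ℝ
  colCuts : Fin (c - 1) → ℝ
  rowCuts_mono : StrictMono rowCuts
  colCuts_mono : StrictMono colCuts

/-- Interval number `i` of the partition of ℝ induced by the cut points `cuts`:
`[cuts (i-1), cuts i)`, with the first interval unbounded below and the last
unbounded above. -/
def cutInterval {m : ℕ} (cuts : Fin (m - 1) → ℝ) (i : Fin m) : Set ℝ :=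
  {t | (∀ j : Fin (m - 1), (j : ℕ) < (i : ℕ) → cuts j ≤ t) ∧
       (∀ j : Fin (m - 1), (i : ℕ) ≤ (j : ℕ) → t < cuts j)}

/-- Cell `(i, j)` (row `i`, column `j`) of a grid, as a subset of ℝ². -/
def Grid.cell {r c : ℕ} (G : Grid r c) (i : Fin r) (j : Fin c) : Set (ℝ × ℝ) :=
  {p | p.1 ∈ cutInterval G.colCuts j ∧ p.2 ∈ cutInterval G.rowCuts i}

/-- The probability mass function on `{1,…,r} × {1,…,c}` induced by a measure `ν`
on a grid `G`: it assigns to `(i, j)` the `ν`-measure of cell `(i, j)`. -/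
def gridPMF {r c : ℕ} (ν : Measure (ℝ × ℝ)) (G : Grid r c) (i : Fin r) (j : Fin c) : ℝ :=
  (ν (G.cell i j)).toReal

open Classical in
/-- The empirical measure of the sample `ω`, as a real-valued set function. -/
def empMeas {n : ℕ} (ω : Fin n → ℝ × ℝ) (S : Set (ℝ × ℝ)) : ℝ :=
  ((Finset.univ.filter (fun i => ω i ∈ S)).card : ℝ) / n

/-- The pmf on cells induced by the empirical measure of the sample `ω`. -/
def empGridPMF {n r c : ℕ} (ω : Fin n → ℝ × ℝ) (G : Grid r c) (i : Fin r) (j : Fin c) : ℝ :=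
  empMeas ω (G.cell i j)

/-- Mutual information (base 2) of a pmf `p` on `Fin r × Fin c`, with the convention
that terms with `p i j = 0` vanish. -/
def MI {r c : ℕ} (p : Fin r → Fin c → ℝ) : ℝ :=
  ∑ i, ∑ j, if p i j = 0 then 0
    else p i j * Real.logb 2 (p i j / ((∑ j', p i j') * (∑ i', p i' j)))


/-- A cell `(i, j)` of the grid `Γ` is `G`-split if it is not contained within a
single cell of `G`. -/
def IsSplit {R S k l : ℕ} (Γ : Grid R S) (G : Grid k l) (i : Fin R) (j : Fin S) : Prop :=
  ¬ ∃ (i' : Fin k) (j' : Fin l), Γ.cell i j ⊆ G.cell i' j'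

open Classical in
/-- The `Γ`-boundary mass of a (real-valued set function standing for a) measure `f`
with respect to `G`: the total `f`-mass of the `G`-split cells of `Γ`. -/
def boundaryMass {R S k l : ℕ} (f : Set (ℝ × ℝ) → ℝ) (Γ : Grid R S) (G : Grid k l) : ℝ :=
  ∑ i, ∑ j, if IsSplit Γ G i j then f (Γ.cell i j) else 0

/-- `G'` is a subgrid of `Γ` if every cut point of `G'` is a cut point of `Γ`. -/
def Subgrid {k l R S : ℕ} (G' : Grid k l) (Γ : Grid R S) : Prop :=
  (∀ i, ∃ i', G'.rowCuts i = Γ.rowCuts i') ∧ (∀ j, ∃ j', G'.colCuts j = Γ.colCuts j')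

/-- `G'` is obtained from `G` by replacing each cut point of `G` that is not a cut
point of `Γ` with a nearest cut point of `Γ`: `G'` is a subgrid of `Γ` and each of
its cut points is a cut point of `Γ` nearest to the corresponding cut point of `G`. -/
def IsSnap {R S k l : ℕ} (Γ : Grid R S) (G G' : Grid k l) : Prop :=
  Subgrid G' Γ ∧
  (∀ i i', |G'.rowCuts i - G.rowCuts i| ≤ |Γ.rowCuts i' - G.rowCuts i|) ∧
  (∀ j j', |G'.colCuts j - G.colCuts j| ≤ |Γ.colCuts j' - G.colCuts j|)

/-- `x · log₂ (β / x)`, with the convention that the value is `0` when `x = 0`. -/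
def xlogb (β x : ℝ) : ℝ := if x = 0 then 0 else x * Real.logb 2 (β / x)

/-!
Mutual information is a signed combination of three entropies (of the row marginal, the column
marginal and the joint distribution), and for `h t = -t log t` the elementary bound
`|h x - h y| ≤ h |x - y| + |x - y|` together with the maximum-entropy bound makes the entropy of a
vector with `n` entries continuous in `ℓ¹` with modulus `2 E log (n / E)`. Snapping `G` to `G'`
changes the cell of a point only inside the `G`-split cells of `Γ`, so the cell masses of `μ` on
`G` and on `G'` are `2 δ`-close in `ℓ¹`. This gives `|I(μ|_G) - I(μ|_{G'})| ≤ 12 δ log₂ (β / δ)`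
for `δ < 1/2`, while `|I| ≤ log₂ β` covers `δ ≥ 1/2`; the triangle inequality through `μ|_{G'}`
and `ν|_{G'}` then gives the theorem with `A = 12`.
-/

namespace Real

lemma negMulLog_add_le {x y : ℝ} (hx : 0 ≤ x) (hy : 0 ≤ y) :
    negMulLog (x + y) ≤ negMulLog x + negMulLog y := by
  rcases hx.eq_or_lt with rfl | hx
  · simp
  rcases hy.eq_or_lt with rfl | hy
  · simp
  have hlx : log x ≤ log (x + y) := log_le_log hx (by linarith)
  have hly : log y ≤ log (x + y) := log_le_log hy (by linarith)
  simp only [negMulLog, neg_mul]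
  nlinarith [mul_le_mul_of_nonneg_left hlx hx.le, mul_le_mul_of_nonneg_left hly hy.le]

lemma negMulLog_sum_le {ι : Type*} (s : Finset ι) {t : ι → ℝ} (ht : ∀ i ∈ s, 0 ≤ t i) :
    negMulLog (∑ i ∈ s, t i) ≤ ∑ i ∈ s, negMulLog (t i) := by
  induction s using Finset.cons_induction with
  | empty => simp
  | cons a s ha ih =>
    rw [sum_cons, sum_cons]
    have hs : ∀ i ∈ s, 0 ≤ t i := fun i hi => ht i (mem_cons_of_mem hi)
    calc negMulLog (t a + ∑ i ∈ s, t i)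
        ≤ negMulLog (t a) + negMulLog (∑ i ∈ s, t i) :=
          negMulLog_add_le (ht a (mem_cons_self a s)) (sum_nonneg hs)
      _ ≤ _ := add_le_add_right (ih hs) _

lemma negMulLog_sub_negMulLog_add_le {x y : ℝ} (hx : 0 ≤ x) (hy : 0 ≤ y) (hxy : x + y ≤ 1) :
    negMulLog x - negMulLog (x + y) ≤ y := by
  rcases hx.eq_or_lt with rfl | hx
  · simp only [zero_add, negMulLog, neg_mul]
    linarith [mul_log_nonpos hy (by linarith)]
  -- `x log ((x + y) / x) ≤ y` and `y log (x + y) ≤ 0`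
  have hlog : log (x + y) - log x ≤ (x + y) / x - 1 := by
    rw [← log_div (by linarith) hx.ne']
    exact log_le_sub_one_of_pos (by positivity)
  have hxy' : x * ((x + y) / x - 1) = y := by field_simp; ring
  have hneg : log (x + y) ≤ 0 := log_nonpos (by linarith) hxy
  simp only [negMulLog, neg_mul]
  nlinarith [mul_le_mul_of_nonneg_left hlog hx.le, mul_nonpos_of_nonneg_of_nonpos hy hneg]

lemma abs_negMulLog_sub_le {x y : ℝ} (hx₀ : 0 ≤ x) (hx₁ : x ≤ 1) (hy₀ : 0 ≤ y) (hy₁ : y ≤ 1) :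
    |negMulLog x - negMulLog y| ≤ negMulLog |x - y| + |x - y| := by
  wlog hyx : y ≤ x generalizing x y
  · rw [abs_sub_comm, abs_sub_comm x]
    exact this hy₀ hy₁ hx₀ hx₁ (le_of_not_ge hyx)
  have hd : 0 ≤ x - y := sub_nonneg.2 hyx
  have hsplit : y + (x - y) = x := by ring
  have hupper := negMulLog_add_le hy₀ hd
  have hlower := negMulLog_sub_negMulLog_add_le hy₀ hd (by linarith)
  rw [hsplit] at hupper hlower
  rw [abs_of_nonneg hd, abs_le]
  constructor <;> linarith [negMulLog_nonneg hd (by linarith : x - y ≤ 1)]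

/-- Rescaling `negMulLog_le_one_sub_self` by `c`. -/
lemma negMulLog_le_mul_log_add {t c : ℝ} (ht : 0 ≤ t) (hc : 0 < c) :
    negMulLog t ≤ t * log c + c⁻¹ - t := by
  have h := negMulLog_le_one_sub_self (mul_nonneg hc.le ht)
  rw [negMulLog_mul, negMulLog] at h
  have h' : c * (negMulLog t - t * log c - c⁻¹ + t) ≤ 0 := by
    field_simp
    linarith
  nlinarith [hc]

lemma sum_negMulLog_le {ι : Type*} (s : Finset ι) {t : ι → ℝ} (ht : ∀ i ∈ s, 0 ≤ t i)
    {n E : ℝ} (hn : 0 < n) (hcard : (s.card : ℝ) ≤ n) (hE : 0 < E) :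
    ∑ i ∈ s, negMulLog (t i) ≤ (∑ i ∈ s, t i) * log (n / E) + E - ∑ i ∈ s, t i := by
  calc ∑ i ∈ s, negMulLog (t i)
      ≤ ∑ i ∈ s, (t i * log (n / E) + (n / E)⁻¹ - t i) :=
        sum_le_sum fun i hi => negMulLog_le_mul_log_add (ht i hi) (by positivity)
    _ = (∑ i ∈ s, t i) * log (n / E) + s.card * (E / n) - ∑ i ∈ s, t i := by
        rw [sum_sub_distrib, sum_add_distrib, sum_const, nsmul_eq_mul, sum_mul, inv_div]
    _ ≤ _ := by
        have : (s.card : ℝ) * (E / n) ≤ n * (E / n) := by gcongr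
        rw [mul_div_cancel₀ _ hn.ne'] at this
        linarith

end Real

section Entropy

open Real

variable {ι κ : Type*} [Fintype ι] [Fintype κ]

/-- Shannon entropy with the natural logarithm (nats), whereas `MI` is in bits. -/
def entropy (p : ι → ℝ) : ℝ := ∑ i, negMulLog (p i)

lemma le_one_of_sum_eq_one {p : ι → ℝ} (hp : ∀ i, 0 ≤ p i) (hp1 : ∑ i, p i = 1) (i : ι) :
    p i ≤ 1 :=
  hp1 ▸ single_le_sum (fun j _ => hp j) (mem_univ i)

lemma entropy_nonneg {p : ι → ℝ} (hp₀ : ∀ i, 0 ≤ p i) (hp₁ : ∀ i, p i ≤ 1) :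
    0 ≤ entropy p :=
  sum_nonneg fun i _ => negMulLog_nonneg (hp₀ i) (hp₁ i)

lemma entropy_le_log_card {p : ι → ℝ} (hp : ∀ i, 0 ≤ p i) (hp1 : ∑ i, p i = 1) :
    entropy p ≤ log (Fintype.card ι) := by
  have hcard : 0 < (Fintype.card ι : ℝ) := by
    have : Nonempty ι := by
      by_contra h
      simp [not_nonempty_iff.1 h] at hp1
    exact_mod_cast Fintype.card_pos
  simpa [entropy, hp1] using sum_negMulLog_le univ (fun i _ => hp i) hcard le_rfl one_pos

lemma entropy_rowMarginal_le {p : ι → κ → ℝ} (hp : ∀ i j, 0 ≤ p i j) :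
    entropy (fun i => ∑ j, p i j) ≤ entropy (Function.uncurry p) := by
  rw [entropy, entropy, Fintype.sum_prod_type]
  exact sum_le_sum fun i _ => negMulLog_sum_le univ fun j _ => hp i j

lemma entropy_colMarginal_le {p : ι → κ → ℝ} (hp : ∀ i j, 0 ≤ p i j) :
    entropy (fun j => ∑ i, p i j) ≤ entropy (Function.uncurry p) := by
  calc entropy (fun j => ∑ i, p i j)
      ≤ entropy (Function.uncurry fun j i => p i j) := entropy_rowMarginal_le fun j i => hp i j
    _ = entropy (Function.uncurry p) := by
      simp only [entropy, Fintype.sum_prod_type, Function.uncurry_apply_pair]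
      exact sum_comm

lemma sum_abs_sum_sub_le (p q : ι → κ → ℝ) :
    ∑ i, |∑ j, p i j - ∑ j, q i j| ≤ ∑ i, ∑ j, |p i j - q i j| :=
  sum_le_sum fun i _ => by
    rw [← sum_sub_distrib]
    exact abs_sum_le_sum_abs _ _

lemma abs_entropy_sub_le {p q : ι → ℝ} (hp₀ : ∀ i, 0 ≤ p i) (hp₁ : ∀ i, p i ≤ 1)
    (hq₀ : ∀ i, 0 ≤ q i) (hq₁ : ∀ i, q i ≤ 1) {n E : ℝ} (hcard : (Fintype.card ι : ℝ) ≤ n)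
    (hE : 0 < E) (hdist : ∑ i, |p i - q i| ≤ E) (hlog : 1 ≤ log (n / E)) :
    |entropy p - entropy q| ≤ 2 * (E * log (n / E)) := by
  have hn : 0 < n := by
    rcases (Nat.cast_nonneg _ |>.trans hcard).eq_or_lt with rfl | hn
    · norm_num at hlog
    · exact hn
  set ε := ∑ i, |p i - q i|
  have hpointwise : |entropy p - entropy q| ≤ ∑ i, negMulLog |p i - q i| + ε := by
    rw [entropy, entropy, ← sum_sub_distrib, ← sum_add_distrib]
    exact (abs_sum_le_sum_abs _ _).trans
      (sum_le_sum fun i _ => abs_negMulLog_sub_le (hp₀ i) (hp₁ i) (hq₀ i) (hq₁ i))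
  have hsum := sum_negMulLog_le univ (fun i _ => abs_nonneg (p i - q i)) hn
    (by simpa using hcard) hE
  nlinarith

end Entropy

section MutualInformation

open Real

variable {r c : ℕ}

lemma MI_eq_entropy (p : Fin r → Fin c → ℝ) (hp : ∀ i j, 0 ≤ p i j) :
    MI p = (entropy (fun i => ∑ j, p i j) + entropy (fun j => ∑ i, p i j)
      - entropy (Function.uncurry p)) / log 2 := by
  have hterm : ∀ i j, (if p i j = 0 then (0 : ℝ)
      else p i j * logb 2 (p i j / ((∑ j', p i j') * (∑ i', p i' j))))
      = (- negMulLog (p i j) - p i j * log (∑ j', p i j')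
          - p i j * log (∑ i', p i' j)) / log 2 := by
    intro i j
    split_ifs with h0
    · simp [h0]
    have hpij : 0 < p i j := (hp i j).lt_of_ne' h0
    have hrow : 0 < ∑ j', p i j' := hpij.trans_le (single_le_sum (fun j' _ => hp i j') (mem_univ j))
    have hcol : 0 < ∑ i', p i' j := hpij.trans_le (single_le_sum (fun i' _ => hp i' j) (mem_univ i))
    rw [logb, log_div hpij.ne' (by positivity), log_mul hrow.ne' hcol.ne', negMulLog]
    ring
  have hrow : ∑ i, ∑ j, p i j * log (∑ j', p i j') = - entropy (fun i => ∑ j, p i j) := by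
    simp only [entropy, negMulLog, neg_mul, sum_neg_distrib, ← sum_mul]
    ring
  have hcol : ∑ i, ∑ j, p i j * log (∑ i', p i' j) = - entropy (fun j => ∑ i, p i j) := by
    rw [sum_comm]
    simp only [entropy, negMulLog, neg_mul, sum_neg_distrib, ← sum_mul]
    ring
  simp only [MI, hterm, ← sum_div, sum_sub_distrib, sum_neg_distrib, hrow, hcol, entropy,
    Fintype.sum_prod_type, Function.uncurry_apply_pair]
  ring

lemma abs_MI_le {p : Fin r → Fin c → ℝ} (hp : ∀ i j, 0 ≤ p i j) (hp1 : ∑ i, ∑ j, p i j = 1) :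
    |MI p| ≤ logb 2 (r * c) := by
  have hrow := entropy_rowMarginal_le hp
  have hcol := entropy_colMarginal_le hp
  have hrow₀ : 0 ≤ entropy (fun i => ∑ j, p i j) :=
    entropy_nonneg (fun i => sum_nonneg fun j _ => hp i j)
      (le_one_of_sum_eq_one (fun i => sum_nonneg fun j _ => hp i j) hp1)
  have hcol₀ : 0 ≤ entropy (fun j => ∑ i, p i j) :=
    entropy_nonneg (fun j => sum_nonneg fun i _ => hp i j)
      (le_one_of_sum_eq_one (fun j => sum_nonneg fun i _ => hp i j) (sum_comm.trans hp1))
  have hjoint : entropy (Function.uncurry p) ≤ log (r * c) := by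
    simpa using entropy_le_log_card (p := Function.uncurry p) (fun x => hp x.1 x.2)
      (by rwa [Fintype.sum_prod_type])
  rw [MI_eq_entropy p hp, logb, abs_div, abs_of_pos (log_pos one_lt_two)]
  gcongr
  rw [abs_le]
  constructor <;> linarith

lemma abs_MI_sub_le {p q : Fin r → Fin c → ℝ} (hp : ∀ i j, 0 ≤ p i j) (hq : ∀ i j, 0 ≤ q i j)
    (hp1 : ∑ i, ∑ j, p i j = 1) (hq1 : ∑ i, ∑ j, q i j = 1) {n E : ℝ} (hn : (r * c : ℝ) ≤ n)
    (hE : 0 < E) (hdist : ∑ i, ∑ j, |p i j - q i j| ≤ E) (hlog : 1 ≤ log (n / E)) :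
    |MI p - MI q| ≤ 6 * xlogb n E := by
  have hr : (1 : ℝ) ≤ r := Nat.one_le_cast.2 <| Nat.pos_of_ne_zero fun h => by subst h; simp at hp1
  have hc : (1 : ℝ) ≤ c := Nat.one_le_cast.2 <| Nat.pos_of_ne_zero fun h => by subst h; simp at hp1
  have hrow₀ {u : Fin r → Fin c → ℝ} (hu : ∀ i j, 0 ≤ u i j) : ∀ i, 0 ≤ ∑ j, u i j :=
    fun i => sum_nonneg fun j _ => hu i j
  have hcol₀ {u : Fin r → Fin c → ℝ} (hu : ∀ i j, 0 ≤ u i j) : ∀ j, 0 ≤ ∑ i, u i j :=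
    fun j => sum_nonneg fun i _ => hu i j
  have hrow := abs_entropy_sub_le (hrow₀ hp) (le_one_of_sum_eq_one (hrow₀ hp) hp1)
    (hrow₀ hq) (le_one_of_sum_eq_one (hrow₀ hq) hq1) (by simp; nlinarith) hE
    ((sum_abs_sum_sub_le p q).trans hdist) hlog
  have hcol := abs_entropy_sub_le (hcol₀ hp)
    (le_one_of_sum_eq_one (hcol₀ hp) (sum_comm.trans hp1))
    (hcol₀ hq) (le_one_of_sum_eq_one (hcol₀ hq) (sum_comm.trans hq1)) (by simp; nlinarith) hE
    ((sum_abs_sum_sub_le _ _).trans (sum_comm.trans_le hdist)) hlog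
  have hjoint := abs_entropy_sub_le (p := Function.uncurry p) (q := Function.uncurry q)
    (fun x => hp x.1 x.2)
    (le_one_of_sum_eq_one (fun x => hp x.1 x.2) (by rwa [Fintype.sum_prod_type]))
    (fun x => hq x.1 x.2)
    (le_one_of_sum_eq_one (fun x => hq x.1 x.2) (by rwa [Fintype.sum_prod_type]))
    (by simpa using hn) hE (by rwa [Fintype.sum_prod_type]) hlog
  rw [MI_eq_entropy p hp, MI_eq_entropy q hq, ← sub_div, abs_div, abs_of_pos (log_pos one_lt_two),
    xlogb, if_neg hE.ne', logb, mul_div_assoc', mul_div_assoc']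
  gcongr
  rw [abs_le] at hrow hcol hjoint ⊢
  constructor <;> linarith [hrow.1, hrow.2, hcol.1, hcol.2, hjoint.1, hjoint.2]

end MutualInformation

section Cells

lemma ordConnected_cutInterval {m : ℕ} (cuts : Fin (m - 1) → ℝ) (i : Fin m) :
    (cutInterval cuts i).OrdConnected :=
  ⟨fun _ hx _ hy _ hz => ⟨fun j hj => (hx.1 j hj).trans hz.1, fun j hj => hz.2.trans_lt (hy.2 j hj)⟩⟩

lemma measurableSet_cutInterval {m : ℕ} (cuts : Fin (m - 1) → ℝ) (i : Fin m) :
    MeasurableSet (cutInterval cuts i) :=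
  (ordConnected_cutInterval cuts i).measurableSet

lemma eq_of_mem_cutInterval {m : ℕ} {cuts : Fin (m - 1) → ℝ} {i i' : Fin m} {t : ℝ}
    (h : t ∈ cutInterval cuts i) (h' : t ∈ cutInterval cuts i') : i = i' := by
  by_contra hne
  wlog hlt : (i : ℕ) < i' generalizing i i'
  · exact this h' h (Ne.symm hne) (by omega)
  have := h.2 ⟨i, by omega⟩ le_rfl
  have := h'.1 ⟨i, by omega⟩ hlt
  linarith

lemma exists_mem_cutInterval {m : ℕ} (hm : 0 < m) {cuts : Fin (m - 1) → ℝ}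
    (hcuts : Monotone cuts) (t : ℝ) : ∃ i : Fin m, t ∈ cutInterval cuts i := by
  classical
  -- the index of `t` is the first `n` from which on all cut points lie to the right of `t`
  have hex : ∃ n : ℕ, ∀ j : Fin (m - 1), n ≤ j → t < cuts j :=
    ⟨m - 1, fun j hj => absurd j.isLt (by omega)⟩
  have hle : Nat.find hex ≤ m - 1 := Nat.find_min' hex fun j hj => absurd j.isLt (by omega)
  refine ⟨⟨Nat.find hex, by omega⟩, fun j hj => ?_, Nat.find_spec hex⟩
  obtain ⟨j', hjj', hj'⟩ : ∃ j' : Fin (m - 1), (j : ℕ) ≤ j' ∧ cuts j' ≤ t := by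
    simpa using Nat.find_min hex hj
  exact (hcuts hjj').trans hj'

variable {r c : ℕ}

lemma Grid.measurableSet_cell (G : Grid r c) (i : Fin r) (j : Fin c) :
    MeasurableSet (G.cell i j) :=
  (measurable_fst (measurableSet_cutInterval _ j)).inter
    (measurable_snd (measurableSet_cutInterval _ i))

lemma Grid.eq_of_mem_cell (G : Grid r c) {i i' : Fin r} {j j' : Fin c} {x : ℝ × ℝ}
    (h : x ∈ G.cell i j) (h' : x ∈ G.cell i' j') : i = i' ∧ j = j' :=
  ⟨eq_of_mem_cutInterval h.2 h'.2, eq_of_mem_cutInterval h.1 h'.1⟩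

lemma Grid.exists_mem_cell (G : Grid r c) (hr : 0 < r) (hc : 0 < c) (x : ℝ × ℝ) :
    ∃ i j, x ∈ G.cell i j := by
  obtain ⟨j, hj⟩ := exists_mem_cutInterval hc G.colCuts_mono.monotone x.1
  obtain ⟨i, hi⟩ := exists_mem_cutInterval hr G.rowCuts_mono.monotone x.2
  exact ⟨i, j, hj, hi⟩

lemma Grid.sum_measureReal_inter_cell (G : Grid r c) (hr : 0 < r) (hc : 0 < c)
    (μ : Measure (ℝ × ℝ)) [IsFiniteMeasure μ] {T : Set (ℝ × ℝ)} (hT : MeasurableSet T) :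
    ∑ i, ∑ j, μ.real (T ∩ G.cell i j) = μ.real T := by
  have hcover : ⋃ x : Fin r × Fin c, T ∩ G.cell x.1 x.2 = T := by
    ext y
    simp only [Set.mem_iUnion, Set.mem_inter_iff, Prod.exists]
    exact ⟨fun ⟨_, _, hy, _⟩ => hy,
      fun hy => (G.exists_mem_cell hr hc y).imp fun _ => .imp fun _ h => ⟨hy, h⟩⟩
  have hdisj : Pairwise (Function.onFun Disjoint fun x : Fin r × Fin c => T ∩ G.cell x.1 x.2) :=
    fun x y hxy => Set.disjoint_left.2 fun z hzx hzy =>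
      hxy (Prod.ext_iff.2 (G.eq_of_mem_cell hzx.2 hzy.2))
  rw [← Fintype.sum_prod_type', ← measureReal_iUnion_fintype hdisj
    fun x => hT.inter (G.measurableSet_cell _ _), hcover]

lemma sum_gridPMF (G : Grid r c) (hr : 0 < r) (hc : 0 < c) (μ : Measure (ℝ × ℝ))
    [IsProbabilityMeasure μ] : ∑ i, ∑ j, gridPMF μ G i j = 1 := by
  have h := G.sum_measureReal_inter_cell hr hc μ MeasurableSet.univ
  simp only [Set.univ_inter, probReal_univ] at h
  exact h

end Cells

section Xlogb

open Real

lemma xlogb_two_mul_le {β x : ℝ} (hβ : 0 < β) (hx : 0 < x) : xlogb β (2 * x) ≤ 2 * xlogb β x := by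
  rw [xlogb, xlogb, if_neg (by positivity), if_neg hx.ne', mul_assoc]
  gcongr
  · exact one_lt_two
  · linarith

lemma logb_le_two_mul_xlogb {β x : ℝ} (hβ : 1 ≤ β) (hx₀ : 1 / 2 ≤ x) (hx₁ : x ≤ 1) :
    logb 2 β ≤ 2 * xlogb β x := by
  have hx : 0 < x := by linarith
  have hmono : logb 2 β ≤ logb 2 (β / x) := by
    gcongr
    · exact one_lt_two
    · exact le_div_self (by linarith) hx hx₁
  rw [xlogb, if_neg hx.ne']
  nlinarith [logb_nonneg one_lt_two hβ]

end Xlogb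

section Snap

open Real

variable {R S k l : ℕ}

/-- Since `c' i` is at least as close to `c i` as every cut point of `γ`, no cut point of `γ`
separates `c i` from `c' i`, so an interval of `γ` on one side of `c i` stays on that side of
`c' i`. -/
lemma cutInterval_subset_of_nearest {M m : ℕ} {γ : Fin (M - 1) → ℝ} {c c' : Fin (m - 1) → ℝ}
    (hγ : StrictMono γ) (hnear : ∀ i p, |c' i - c i| ≤ |γ p - c i|) {a : Fin M} {j : Fin m}
    (h : cutInterval γ a ⊆ cutInterval c j) : cutInterval γ a ⊆ cutInterval c' j := by
  intro t ht
  refine ⟨fun i hi => ?_, fun i hi => ?_⟩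
  · obtain ⟨p, hpa, hcp⟩ : ∃ p : Fin (M - 1), (p : ℕ) < a ∧ c i ≤ γ p := by
      rcases Nat.eq_zero_or_pos (a : ℕ) with ha | ha
      · -- `cutInterval γ a` is unbounded below, so it cannot lie to the right of `c i`
        have hs : min t (c i) - 1 ∈ cutInterval γ a :=
          ⟨fun p hp => absurd hp (by omega),
            fun p hp => by linarith [min_le_left t (c i), ht.2 p hp]⟩
        linarith [(h hs).1 i hi, min_le_right t (c i)]
      · refine ⟨⟨a - 1, by omega⟩, by simp only; omega,
          (h ⟨fun p hp => hγ.monotone ?_, fun p hp => hγ ?_⟩).1 i hi⟩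
        · simp only [Fin.le_def]; omega
        · simp only [Fin.lt_def]; omega
    have hnp := hnear i p
    rw [abs_of_nonneg (sub_nonneg.2 hcp)] at hnp
    linarith [le_abs_self (c' i - c i), ht.1 p hpa]
  · obtain ⟨p, hap, hpc⟩ : ∃ p : Fin (M - 1), (a : ℕ) ≤ p ∧ γ p ≤ c i := by
      by_contra! H
      -- otherwise `c i` itself would lie in `cutInterval γ a`
      have hc : c i ∈ cutInterval γ a := ⟨fun p hp => (ht.1 p hp).trans ((h ht).2 i hi).le, H⟩
      exact lt_irrefl _ ((h hc).2 i hi)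
    have hnp := hnear i p
    rw [abs_of_nonpos (sub_nonpos.2 hpc)] at hnp
    linarith [neg_abs_le (c' i - c i), ht.2 p hap]

lemma IsSnap.cell_subset {Γ : Grid R S} {G G' : Grid k l} (hs : IsSnap Γ G G') {a b i j}
    (h : Γ.cell a b ⊆ G.cell i j) : Γ.cell a b ⊆ G'.cell i j := by
  rintro x ⟨hx₁, hx₂⟩
  exact ⟨cutInterval_subset_of_nearest Γ.colCuts_mono hs.2.2
      (fun u hu => (h (show (u, x.2) ∈ Γ.cell a b from ⟨hu, hx₂⟩)).1) hx₁,
    cutInterval_subset_of_nearest Γ.rowCuts_mono hs.2.1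
      (fun u hu => (h (show (x.1, u) ∈ Γ.cell a b from ⟨hx₁, hu⟩)).2) hx₂⟩

def splitRegion (Γ : Grid R S) (G : Grid k l) : Set (ℝ × ℝ) :=
  ⋃ a, ⋃ b, ⋃ (_ : IsSplit Γ G a b), Γ.cell a b

lemma measurableSet_splitRegion (Γ : Grid R S) (G : Grid k l) :
    MeasurableSet (splitRegion Γ G) :=
  .iUnion fun a => .iUnion fun b => .iUnion fun _ => Γ.measurableSet_cell a b

lemma subset_splitRegion {Γ : Grid R S} {G : Grid k l} {a : Fin R} {b : Fin S}
    (h : IsSplit Γ G a b) : Γ.cell a b ⊆ splitRegion Γ G :=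
  fun _ hx => Set.mem_iUnion₂.2 ⟨a, b, Set.mem_iUnion.2 ⟨h, hx⟩⟩

lemma boundaryMass_eq_measureReal_splitRegion (Γ : Grid R S) (G : Grid k l) (hR : 0 < R)
    (hS : 0 < S) (μ : Measure (ℝ × ℝ)) [IsFiniteMeasure μ] :
    boundaryMass μ.real Γ G = μ.real (splitRegion Γ G) := by
  rw [← Γ.sum_measureReal_inter_cell hR hS μ (measurableSet_splitRegion Γ G), boundaryMass]
  refine sum_congr rfl fun a _ => sum_congr rfl fun b _ => ?_
  split_ifs with hsplit
  · rw [Set.inter_eq_right.2 (subset_splitRegion hsplit)]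
  · have hempty : splitRegion Γ G ∩ Γ.cell a b = ∅ := by
      refine Set.eq_empty_iff_forall_notMem.2 fun x hx => ?_
      obtain ⟨a', b', hsplit', hx'⟩ : ∃ a' b', IsSplit Γ G a' b' ∧ x ∈ Γ.cell a' b' := by
        simpa [splitRegion] using hx.1
      obtain ⟨rfl, rfl⟩ := Γ.eq_of_mem_cell hx' hx.2
      exact hsplit hsplit'
    rw [hempty, measureReal_empty]

lemma IsSnap.mem_cell_iff {Γ : Grid R S} {G G' : Grid k l} (hs : IsSnap Γ G G') (hR : 0 < R)
    (hS : 0 < S) {x : ℝ × ℝ} (hx : x ∉ splitRegion Γ G) (i : Fin k) (j : Fin l) :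
    x ∈ G.cell i j ↔ x ∈ G'.cell i j := by
  obtain ⟨a, b, hab⟩ := Γ.exists_mem_cell hR hS x
  obtain ⟨i', j', hsub⟩ : ∃ i' j', Γ.cell a b ⊆ G.cell i' j' :=
    not_not.1 fun hsplit => hx (subset_splitRegion hsplit hab)
  have hsub' := hs.cell_subset hsub
  constructor
  · intro h
    obtain ⟨rfl, rfl⟩ := G.eq_of_mem_cell (hsub hab) h
    exact hsub' hab
  · intro h
    obtain ⟨rfl, rfl⟩ := G'.eq_of_mem_cell (hsub' hab) h
    exact hsub hab

lemma IsSnap.gridPMF_sub_eq {Γ : Grid R S} {G G' : Grid k l} (hs : IsSnap Γ G G') (hR : 0 < R)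
    (hS : 0 < S) (μ : Measure (ℝ × ℝ)) [IsFiniteMeasure μ] (i : Fin k) (j : Fin l) :
    gridPMF μ G i j - gridPMF μ G' i j =
      μ.real (G.cell i j ∩ splitRegion Γ G) - μ.real (G'.cell i j ∩ splitRegion Γ G) := by
  have hout : G.cell i j \ splitRegion Γ G = G'.cell i j \ splitRegion Γ G :=
    Set.ext fun x => and_congr_left fun hx => hs.mem_cell_iff hR hS hx i j
  change μ.real (G.cell i j) - μ.real (G'.cell i j) = _
  rw [← measureReal_inter_add_sdiff (s := G.cell i j) (measurableSet_splitRegion Γ G),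
    ← measureReal_inter_add_sdiff (s := G'.cell i j) (measurableSet_splitRegion Γ G), hout,
    add_sub_add_right_eq_sub]

lemma IsSnap.sum_abs_gridPMF_sub_le {Γ : Grid R S} {G G' : Grid k l} (hs : IsSnap Γ G G')
    (hR : 0 < R) (hS : 0 < S) (hk : 0 < k) (hl : 0 < l) (μ : Measure (ℝ × ℝ))
    [IsFiniteMeasure μ] :
    ∑ i, ∑ j, |gridPMF μ G i j - gridPMF μ G' i j| ≤ 2 * μ.real (splitRegion Γ G) := by
  have hB := measurableSet_splitRegion Γ G
  calc ∑ i, ∑ j, |gridPMF μ G i j - gridPMF μ G' i j|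
      ≤ ∑ i, ∑ j, (μ.real (splitRegion Γ G ∩ G.cell i j) +
          μ.real (splitRegion Γ G ∩ G'.cell i j)) := by
        refine sum_le_sum fun i _ => sum_le_sum fun j _ => ?_
        rw [hs.gridPMF_sub_eq hR hS μ, Set.inter_comm, Set.inter_comm (G'.cell i j)]
        exact (abs_sub _ _).trans_eq (by simp only [abs_of_nonneg measureReal_nonneg])
    _ = 2 * μ.real (splitRegion Γ G) := by
        simp only [sum_add_distrib, G.sum_measureReal_inter_cell hk hl μ hB,
          G'.sum_measureReal_inter_cell hk hl μ hB]
        ring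

lemma IsSnap.abs_MI_gridPMF_sub_le {Γ : Grid R S} {G G' : Grid k l} (hs : IsSnap Γ G G')
    (hR : 0 < R) (hS : 0 < S) (hk : 2 ≤ k) (hl : 2 ≤ l) (μ : Measure (ℝ × ℝ))
    [IsProbabilityMeasure μ] :
    |MI (gridPMF μ G) - MI (gridPMF μ G')| ≤
      12 * xlogb (k * l : ℕ) (boundaryMass (fun T => (μ T).toReal) Γ G) := by
  have hp := sum_gridPMF G (by omega) (by omega) μ
  have hp' := sum_gridPMF G' (by omega) (by omega) μ
  have hβ : (4 : ℝ) ≤ (k * l : ℕ) := by exact_mod_cast Nat.mul_le_mul hk hl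
  change _ ≤ 12 * xlogb _ (boundaryMass μ.real Γ G)
  rw [boundaryMass_eq_measureReal_splitRegion Γ G hR hS μ]
  set δ := μ.real (splitRegion Γ G)
  obtain hδ | hδ | hδ : δ = 0 ∨ 0 < δ ∧ δ < 1 / 2 ∨ 1 / 2 ≤ δ := by
    rcases measureReal_nonneg.eq_or_lt with h | h
    · exact .inl h.symm
    · exact .inr ((lt_or_ge _ _).imp (⟨h, ·⟩) id)
  · have hpq : gridPMF μ G = gridPMF μ G' := funext₂ fun i j => sub_eq_zero.1 <| by
      rw [hs.gridPMF_sub_eq hR hS μ, measureReal_mono_null Set.inter_subset_right hδ,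
        measureReal_mono_null Set.inter_subset_right hδ, sub_self]
    simp [hpq, hδ, xlogb]
  · have hlog : 1 ≤ log ((k * l : ℕ) / (2 * δ)) := by
      have h4 : (4 : ℝ) ≤ (k * l : ℕ) / (2 * δ) := (le_div_iff₀ (by linarith)).2 (by nlinarith)
      rw [le_log_iff_exp_le (by linarith)]
      linarith [exp_one_lt_d9]
    calc |MI (gridPMF μ G) - MI (gridPMF μ G')|
        ≤ 6 * xlogb (k * l : ℕ) (2 * δ) :=
          abs_MI_sub_le (fun _ _ => measureReal_nonneg) (fun _ _ => measureReal_nonneg) hp hp'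
            (Nat.cast_mul k l).ge (by linarith) (hs.sum_abs_gridPMF_sub_le hR hS (by omega)
              (by omega) μ) hlog
      _ ≤ 12 * xlogb (k * l : ℕ) δ := by
          linarith [xlogb_two_mul_le (β := (k * l : ℕ)) (by linarith) hδ.1]
  · have hlogb := logb_le_two_mul_xlogb (β := (k * l : ℕ)) (by linarith) hδ measureReal_le_one
    calc |MI (gridPMF μ G) - MI (gridPMF μ G')|
        ≤ |MI (gridPMF μ G)| + |MI (gridPMF μ G')| := abs_sub _ _
      _ ≤ logb 2 (k * l : ℕ) + logb 2 (k * l : ℕ) := by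
          push_cast
          exact add_le_add (abs_MI_le (fun _ _ => measureReal_nonneg) hp)
            (abs_MI_le (fun _ _ => measureReal_nonneg) hp')
      _ ≤ 12 * xlogb (k * l : ℕ) δ := by
          linarith [logb_nonneg one_lt_two (by linarith : (1 : ℝ) ≤ (k * l : ℕ))]

end Snap

theorem stmt3 :
    ∃ A > (0 : ℝ), ∀ (μ ν : Measure (ℝ × ℝ)), IsProbabilityMeasure μ →
      IsProbabilityMeasure ν →
      ∀ (R S k l : ℕ) (Γ : Grid R S) (G G' : Grid k l), 2 ≤ k → 2 ≤ l →
        k * l < R * S → IsSnap Γ G G' →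
        |MI (gridPMF μ G) - MI (gridPMF ν G)| ≤
          A * xlogb (k * l : ℕ) (boundaryMass (fun T => (μ T).toReal) Γ G) +
          A * xlogb (k * l : ℕ) (boundaryMass (fun T => (ν T).toReal) Γ G) +
          |MI (gridPMF μ G') - MI (gridPMF ν G')| := by
  refine ⟨12, by norm_num, fun μ ν _ _ R S k l Γ G G' hk hl hRS hs => ?_⟩
  have hR : 0 < R := Nat.pos_of_ne_zero fun h => by simp [h] at hRS
  have hS : 0 < S := Nat.pos_of_ne_zero fun h => by simp [h] at hRS
  have hμ := hs.abs_MI_gridPMF_sub_le hR hS hk hl μ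
  have hν := hs.abs_MI_gridPMF_sub_le hR hS hk hl ν
  calc |MI (gridPMF μ G) - MI (gridPMF ν G)|
      ≤ |MI (gridPMF μ G) - MI (gridPMF μ G')| + |MI (gridPMF μ G') - MI (gridPMF ν G')| +
          |MI (gridPMF ν G) - MI (gridPMF ν G')| := by
        rw [abs_sub_comm (MI (gridPMF ν G))]
        exact (abs_sub_le _ (MI (gridPMF ν G')) _).trans (by gcongr; exact abs_sub_le _ _ _)
    _ ≤ _ := by linarith
end
end

section
/- Let μ be a Borel probability measure on ℝ², let k, ℓ ≥ 2 and m ≥ 1 be integers, and let Γ be an equipartition of μ into k·m rows and ℓ·m columns. Then for every k×ℓ grid G, the Γ-boundary mass of μ with respect to G is at most 2/m. -/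
open MeasureTheory Finset

noncomputable section

/-- `Γ` is an equipartition of `μ` into `R` rows and `S` columns if every row of
`μ|_Γ` has total mass `1/R` and every column has total mass `1/S`. -/
def IsEquipartition (μ : Measure (ℝ × ℝ)) {R S : ℕ} (Γ : Grid R S) : Prop :=
  (∀ i, ∑ j, gridPMF μ Γ i j = 1 / (R : ℝ)) ∧ (∀ j, ∑ i, gridPMF μ Γ i j = 1 / (S : ℝ))

def SplitAt {n k : ℕ} (a : Fin (n - 1) → ℝ) (c : Fin (k - 1) → ℝ) (i : Fin n) : Prop :=
  ∃ j : Fin (k - 1), ∃ s ∈ cutInterval a i, ∃ t ∈ cutInterval a i, s < c j ∧ c j ≤ t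

lemma cutInterval_lt {n : ℕ} (a : Fin (n - 1) → ℝ) {i i' : Fin n} (h : i < i')
    {s t : ℝ} (hs : s ∈ cutInterval a i) (ht : t ∈ cutInterval a i') : s < t := by
  have hi : (i : ℕ) < n - 1 := by have := i'.isLt; have : (i:ℕ) < (i':ℕ) := h; omega
  have h1 : s < a ⟨i, hi⟩ := hs.2 ⟨i, hi⟩ (le_refl _)
  have h2 : a ⟨i, hi⟩ ≤ t := ht.1 ⟨i, hi⟩ h
  linarith

lemma exists_subset_of_not_splitAt {n k : ℕ} (hk : 1 ≤ k) {a : Fin (n - 1) → ℝ}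
    {c : Fin (k - 1) → ℝ} (hc : StrictMono c) {i : Fin n}
    (h : ¬ SplitAt a c i) : ∃ i' : Fin k, cutInterval a i ⊆ cutInterval c i' := by
  classical
  by_cases hne : (cutInterval a i).Nonempty
  · obtain ⟨t0, ht0⟩ := hne
    set S : Finset (Fin (k-1)) := univ.filter (fun j => c j ≤ t0) with hS
    have hcard : S.card < k := by
      have h1 := Finset.card_le_card (Finset.subset_univ S)
      simp only [Finset.card_univ, Fintype.card_fin] at h1
      omega
    have hdown : ∀ j j' : Fin (k-1), j' ≤ j → j ∈ S → j' ∈ S := by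
      intro j j' hle hj
      simp only [hS, mem_filter, mem_univ, true_and] at hj ⊢
      exact le_trans (hc.monotone hle) hj
    have hmem : ∀ j : Fin (k-1), j ∈ S ↔ (j:ℕ) < S.card := by
      intro j
      constructor
      · intro hj
        have hsub : Finset.Iic j ⊆ S := fun j' hj' => hdown j j' (Finset.mem_Iic.1 hj') hj
        have := Finset.card_le_card hsub
        rw [Fin.card_Iic] at this
        omega
      · intro hj
        by_contra hjS
        have hsub : S ⊆ Finset.Iio j := fun j' hj' =>
          Finset.mem_Iio.2 (lt_of_not_ge fun hle => hjS (hdown j' j hle hj'))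
        have := Finset.card_le_card hsub
        rw [Fin.card_Iio] at this
        omega
    refine ⟨⟨S.card, hcard⟩, ?_⟩
    intro t ht
    constructor
    · intro j hj
      have hjt0 : c j ≤ t0 := by
        have := (hmem j).2 hj
        simpa [hS] using this
      by_contra hlt
      push_neg at hlt
      exact h ⟨j, t, ht, t0, ht0, hlt, hjt0⟩
    · intro j hj
      have hjS : j ∉ S := fun hjS => by have := (hmem j).1 hjS; simp at hj; omega
      have ht0j : t0 < c j := lt_of_not_ge (by simpa [hS] using hjS)
      by_contra hle
      push_neg at hle
      exact h ⟨j, t0, ht0, t, ht, ht0j, hle⟩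
  · exact ⟨⟨0, by omega⟩, fun t ht => absurd ⟨t, ht⟩ hne⟩

open Classical in
lemma card_splitAt_le {n k : ℕ} (a : Fin (n - 1) → ℝ) (c : Fin (k - 1) → ℝ) :
    (univ.filter (fun i => SplitAt a c i)).card ≤ k - 1 := by
  classical
  by_cases hk1 : k - 1 = 0
  · have : (univ.filter (fun i => SplitAt a c i)) = ∅ := by
      ext i
      simp only [mem_filter, mem_univ, true_and, Finset.notMem_empty, iff_false]
      rintro ⟨j, -⟩
      exact absurd j.isLt (by omega)
    simp [this]
  · have hpos : 0 < k - 1 := Nat.pos_of_ne_zero hk1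
    have := Finset.card_le_card_of_injOn
      (f := fun i => if h : SplitAt a c i then h.choose else ⟨0, hpos⟩)
      (s := univ.filter (fun i => SplitAt a c i)) (t := (univ : Finset (Fin (k-1))))
      (fun i _ => mem_univ _) ?_
    · simpa using this
    · intro i1 h1 i2 h2 heq
      simp only [coe_filter, Set.mem_setOf_eq, mem_univ, true_and] at h1 h2
      simp only [dif_pos h1, dif_pos h2] at heq
      obtain ⟨s1, hs1, t1, ht1, hst1, hct1⟩ := h1.choose_spec
      obtain ⟨s2, hs2, t2, ht2, hst2, hct2⟩ := h2.choose_spec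
      by_contra hne
      rcases lt_trichotomy i1 i2 with hlt | heq' | hlt
      · have := cutInterval_lt a hlt ht1 hs2
        rw [heq] at hct1
        linarith
      · exact hne heq'
      · have := cutInterval_lt a hlt ht2 hs1
        rw [← heq] at hct2
        linarith


open Classical in
lemma sum_ite_bound {n k mm : ℕ} (hk : 1 ≤ k) (hmm : 1 ≤ mm) (P : Fin n → Prop)
    (hcard : (univ.filter P).card ≤ k - 1) (g : Fin n → ℝ)
    (hg : ∀ i, P i → g i = 1 / ((k : ℝ) * mm)) :
    (∑ i, if P i then g i else 0) ≤ 1 / (mm : ℝ) := by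
  have hk0 : (0:ℝ) < (k : ℝ) := by exact_mod_cast hk
  have hm0 : (0:ℝ) < (mm : ℝ) := by exact_mod_cast hmm
  rw [← Finset.sum_filter]
  have heq : ∑ i ∈ univ.filter P, g i = ((univ.filter P).card : ℝ) * (1 / ((k:ℝ)*mm)) := by
    rw [Finset.sum_congr rfl (fun i hi => hg i (Finset.mem_filter.1 hi).2), Finset.sum_const,
      nsmul_eq_mul]
  rw [heq]
  have h1 : ((univ.filter P).card : ℝ) ≤ (k : ℝ) := by
    have : (univ.filter P).card ≤ k := le_trans hcard (Nat.sub_le k 1)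
    exact_mod_cast this
  have h2 : ((univ.filter P).card : ℝ) * (1 / ((k:ℝ)*mm)) ≤ (k:ℝ) * (1 / ((k:ℝ)*mm)) := by
    apply mul_le_mul_of_nonneg_right h1
    positivity
  have h3 : (k:ℝ) * (1 / ((k:ℝ)*mm)) = 1 / (mm:ℝ) := by
    field_simp
  linarith

lemma split_imp {R S k l : ℕ} (hk : 1 ≤ k) (hl : 1 ≤ l) (Γ : Grid R S) (G : Grid k l)
    {i : Fin R} {j : Fin S} (h : IsSplit Γ G i j) :
    SplitAt Γ.rowCuts G.rowCuts i ∨ SplitAt Γ.colCuts G.colCuts j := by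
  by_contra hc
  push_neg at hc
  obtain ⟨i', hi'⟩ := exists_subset_of_not_splitAt hk G.rowCuts_mono hc.1
  obtain ⟨j', hj'⟩ := exists_subset_of_not_splitAt hl G.colCuts_mono hc.2
  exact h ⟨i', j', fun p hp => ⟨hj' hp.1, hi' hp.2⟩⟩

theorem stmt4' (μ : Measure (ℝ × ℝ)) [IsProbabilityMeasure μ]
    (k l m : ℕ) (hk : 2 ≤ k) (hl : 2 ≤ l) (hm : 1 ≤ m)
    (Γ : Grid (k * m) (l * m)) (hΓ : IsEquipartition μ Γ) :
    ∀ G : Grid k l, boundaryMass (fun T => (μ T).toReal) Γ G ≤ 2 / (m : ℝ) := by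
  intro G
  classical
  have step1 : ∀ (i : Fin (k*m)) (j : Fin (l*m)),
      (if IsSplit Γ G i j then (μ (Γ.cell i j)).toReal else 0) ≤
      (if SplitAt Γ.rowCuts G.rowCuts i then (μ (Γ.cell i j)).toReal else 0)
      + (if SplitAt Γ.colCuts G.colCuts j then (μ (Γ.cell i j)).toReal else 0) := by
    intro i j
    have hx0 : 0 ≤ (μ (Γ.cell i j)).toReal := ENNReal.toReal_nonneg
    have hA : 0 ≤ (if SplitAt Γ.rowCuts G.rowCuts i then (μ (Γ.cell i j)).toReal else 0) := by
      split <;> simp [hx0]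
    have hB : 0 ≤ (if SplitAt Γ.colCuts G.colCuts j then (μ (Γ.cell i j)).toReal else 0) := by
      split <;> simp [hx0]
    by_cases hs : IsSplit Γ G i j
    · rw [if_pos hs]
      rcases split_imp (by omega) (by omega) Γ G hs with hr | hc2
      · rw [if_pos hr]; linarith
      · rw [if_pos hc2]; linarith
    · rw [if_neg hs]; linarith
  have hrow : (∑ i : Fin (k*m), if SplitAt Γ.rowCuts G.rowCuts i
      then (∑ j : Fin (l*m), (μ (Γ.cell i j)).toReal) else 0) ≤ 1 / (m : ℝ) := by
    apply sum_ite_bound (by omega) hm _ (card_splitAt_le _ _)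
    intro i _
    have := hΓ.1 i
    simp only [gridPMF] at this
    rw [this]
    push_cast
    ring
  have hcol : (∑ j : Fin (l*m), if SplitAt Γ.colCuts G.colCuts j
      then (∑ i : Fin (k*m), (μ (Γ.cell i j)).toReal) else 0) ≤ 1 / (m : ℝ) := by
    apply sum_ite_bound (by omega) hm _ (card_splitAt_le _ _)
    intro j _
    have := hΓ.2 j
    simp only [gridPMF] at this
    rw [this]
    push_cast
    ring
  calc boundaryMass (fun T => (μ T).toReal) Γ G
      = ∑ i, ∑ j, (if IsSplit Γ G i j then (μ (Γ.cell i j)).toReal else 0) := rfl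
    _ ≤ ∑ i, ∑ j, ((if SplitAt Γ.rowCuts G.rowCuts i then (μ (Γ.cell i j)).toReal else 0)
        + (if SplitAt Γ.colCuts G.colCuts j then (μ (Γ.cell i j)).toReal else 0)) :=
        Finset.sum_le_sum (fun i _ => Finset.sum_le_sum (fun j _ => step1 i j))
    _ = (∑ i, ∑ j, (if SplitAt Γ.rowCuts G.rowCuts i then (μ (Γ.cell i j)).toReal else 0))
        + (∑ j, ∑ i, (if SplitAt Γ.colCuts G.colCuts j then (μ (Γ.cell i j)).toReal else 0)) := by
        rw [Finset.sum_comm (s := (univ : Finset (Fin (l*m)))) (t := (univ : Finset (Fin (k*m))))]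
        simp [Finset.sum_add_distrib]
    _ = (∑ i : Fin (k*m), if SplitAt Γ.rowCuts G.rowCuts i
          then (∑ j : Fin (l*m), (μ (Γ.cell i j)).toReal) else 0)
        + (∑ j : Fin (l*m), if SplitAt Γ.colCuts G.colCuts j
          then (∑ i : Fin (k*m), (μ (Γ.cell i j)).toReal) else 0) := by
        congr 1
        · exact Finset.sum_congr rfl fun i _ => by split <;> simp
        · exact Finset.sum_congr rfl fun j _ => by split <;> simp
    _ ≤ 1 / (m:ℝ) + 1 / (m:ℝ) := add_le_add hrow hcol
    _ = 2 / (m:ℝ) := by ring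


theorem stmt4 (μ : Measure (ℝ × ℝ)) [IsProbabilityMeasure μ]
    (k l m : ℕ) (hk : 2 ≤ k) (hl : 2 ≤ l) (hm : 1 ≤ m)
    (Γ : Grid (k * m) (l * m)) (hΓ : IsEquipartition μ Γ) :
    ∀ G : Grid k l, boundaryMass (fun T => (μ T).toReal) Γ G ≤ 2 / (m : ℝ) :=
  stmt4' μ k l m hk hl hm Γ hΓ

end
end
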